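/- Let p-values p₁,…,p_m be independent and uniformly distributed on [0,1] under their respective true null hypotheses, with m₀ of the m hypotheses being true nulls. Then the Benjamini–Hochberg procedure at level α controls the false discovery rate: FDR ≤ (m₀/m) α ≤ α. -/

import Mathlib

open MeasureTheory ProbabilityTheory
open scoped ProbabilityTheory

namespace BH
variable (m : ℕ) (α : ℝ)

/-- number of coordinates of `x` at most `t` -/
noncomputable def cnt (x : Fin m → ℝ) (t : ℝ) : ℕ := (Finset.univ.filter fun j => x j ≤ t).card

/-- the set of candidate `k` for the BH procedure -/
def S (x : Fin m → ℝ) : Set ℕ := {k | k ≤ m ∧ k ≤ cnt m x (k * α / m)}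

/-- the BH cutoff index -/
noncomputable def khatF (x : Fin m → ℝ) : ℕ := sSup (S m α x)

variable {m α}

lemma cnt_mono {x : Fin m → ℝ} {s t : ℝ} (h : s ≤ t) : cnt m x s ≤ cnt m x t := by
  apply Finset.card_le_card
  intro j hj
  simp only [Finset.mem_filter] at *
  exact ⟨hj.1, hj.2.trans h⟩

lemma cnt_le (x : Fin m → ℝ) (t : ℝ) : cnt m x t ≤ m := by
  simpa [cnt] using (Finset.card_filter_le Finset.univ fun j => x j ≤ t)

lemma zero_mem_S (x : Fin m → ℝ) : 0 ∈ S m α x := ⟨Nat.zero_le _, Nat.zero_le _⟩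

lemma bddAbove_S (x : Fin m → ℝ) : BddAbove (S m α x) := ⟨m, fun k hk => hk.1⟩

lemma khatF_mem (x : Fin m → ℝ) : khatF m α x ∈ S m α x :=
  Nat.sSup_mem ⟨0, zero_mem_S x⟩ (bddAbove_S x)

lemma le_khatF {x : Fin m → ℝ} {k : ℕ} (hk : k ∈ S m α x) : k ≤ khatF m α x :=
  le_csSup (bddAbove_S x) hk

lemma khatF_le (x : Fin m → ℝ) : khatF m α x ≤ m := (khatF_mem x).1

lemma measurable_cnt (t : ℝ) : Measurable (fun x : Fin m → ℝ => cnt m x t) := by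
  unfold cnt
  simp only [Finset.card_filter]
  apply Finset.measurable_sum
  intro j _
  exact Measurable.ite (measurableSet_le (measurable_pi_apply j) measurable_const)
    measurable_const measurable_const

lemma measurable_khatF : Measurable (khatF m α) := by
  apply measurable_to_countable'
  intro k
  have : (khatF m α) ⁻¹' {k} = {x | k ∈ S m α x} ∩ ⋂ j : ℕ, {x | j ∈ S m α x → j ≤ k} := by
    ext x
    simp only [Set.mem_preimage, Set.mem_singleton_iff, Set.mem_inter_iff, Set.mem_iInter,
      Set.mem_setOf_eq]
    constructor
    · rintro rfl
      exact ⟨khatF_mem x, fun j hj => le_khatF hj⟩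
    · rintro ⟨h1, h2⟩
      exact le_antisymm (csSup_le ⟨0, zero_mem_S x⟩ h2) (le_khatF h1)
  rw [this]
  apply MeasurableSet.inter
  · have : {x : Fin m → ℝ | k ∈ S m α x} =
        {x : Fin m → ℝ | k ≤ m} ∩ ((fun x => cnt m x (k * α / m)) ⁻¹' {n | k ≤ n}) := rfl
    rw [this]
    exact ((MeasurableSet.const _).inter ((measurable_cnt _) (by trivial)))
  · apply MeasurableSet.iInter
    intro j
    have : {x : Fin m → ℝ | j ∈ S m α x → j ≤ k} =
        ({x : Fin m → ℝ | j ≤ m} ∩ ((fun x => cnt m x (j * α / m)) ⁻¹' {n | j ≤ n}))ᶜ ∪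
        {x | j ≤ k} := by
      ext x
      by_cases h : j ≤ k <;>
        simp [S, h, imp_iff_not_or, Set.mem_setOf_eq, and_comm] <;> tauto
    rw [this]
    exact (((MeasurableSet.const _).inter ((measurable_cnt _) (by trivial))).compl).union
      (MeasurableSet.const _)


lemma cnt_khatF (hα : 0 ≤ α) (x : Fin m → ℝ) :
    cnt m x (khatF m α x * α / m) = khatF m α x := by
  set k := khatF m α x with hk
  have h1 : k ≤ cnt m x (k * α / m) := (khatF_mem x).2
  refine le_antisymm ?_ h1
  set c := cnt m x ((k:ℝ) * α / m) with hc
  have hkc : (k:ℝ) * α / m ≤ (c:ℝ) * α / m := by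
    have : (k:ℝ) ≤ c := Nat.cast_le.2 h1
    rcases Nat.eq_zero_or_pos m with hm0 | hm0
    · simp [hm0]
    · have hm' : (0:ℝ) < m := by exact_mod_cast hm0
      gcongr
  have hcS : c ∈ S m α x := ⟨cnt_le x _, hc ▸ cnt_mono hkc⟩
  exact le_khatF hcS

lemma one_le_khatF_update (hm : 0 < m) (hα : 0 < α) (x : Fin m → ℝ) (i : Fin m) :
    1 ≤ khatF m α (Function.update x i 0) := by
  apply le_khatF
  refine ⟨hm, ?_⟩
  rw [cnt]
  apply Finset.card_pos.2
  refine ⟨i, Finset.mem_filter.2 ⟨Finset.mem_univ i, ?_⟩⟩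
  rw [Function.update_self]
  positivity

lemma cnt_le_cnt_update {x : Fin m → ℝ} {i : Fin m} {t : ℝ} (ht : 0 ≤ t) :
    cnt m x t ≤ cnt m (Function.update x i 0) t := by
  apply Finset.card_le_card
  intro j hj
  simp only [Finset.mem_filter, Finset.mem_univ, true_and] at *
  by_cases h : j = i
  · subst h; rw [Function.update_self]; exact ht
  · rw [Function.update_of_ne h]; exact hj

lemma khatF_le_update (hα : 0 ≤ α) (x : Fin m → ℝ) (i : Fin m) :
    khatF m α x ≤ khatF m α (Function.update x i 0) := by
  apply le_khatF
  refine ⟨khatF_le x, le_trans (khatF_mem x).2 (cnt_le_cnt_update ?_)⟩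
  positivity

lemma khatF_update_le {x : Fin m → ℝ} {i : Fin m}
    (h : x i ≤ khatF m α (Function.update x i 0) * α / m) :
    khatF m α (Function.update x i 0) ≤ khatF m α x := by
  set k' := khatF m α (Function.update x i 0) with hk'
  have hsub : cnt m (Function.update x i 0) ((k':ℝ) * α / m) ≤ cnt m x ((k':ℝ) * α / m) := by
    apply Finset.card_le_card
    intro j hj
    simp only [Finset.mem_filter, Finset.mem_univ, true_and] at *
    by_cases hji : j = i
    · subst hji; exact h
    · rwa [Function.update_of_ne hji] at hj
  exact le_khatF ⟨khatF_le _, le_trans (khatF_mem _).2 hsub⟩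

lemma event_iff (hα : 0 ≤ α) (x : Fin m → ℝ) (i : Fin m) :
    x i ≤ khatF m α x * α / m ↔ x i ≤ khatF m α (Function.update x i 0) * α / m := by
  have hle : khatF m α x ≤ khatF m α (Function.update x i 0) := khatF_le_update hα x i
  have hmono : (khatF m α x : ℝ) * α / m ≤ (khatF m α (Function.update x i 0) : ℝ) * α / m := by
    rcases Nat.eq_zero_or_pos m with hm0 | hm0
    · simp [hm0]
    · have hm' : (0:ℝ) < m := by exact_mod_cast hm0
      have : (khatF m α x : ℝ) ≤ (khatF m α (Function.update x i 0) : ℝ) := Nat.cast_le.2 hle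
      gcongr
  constructor
  · intro h; exact h.trans hmono
  · intro h
    have := le_antisymm hle (khatF_update_le h)
    rwa [this]

lemma khatF_update_eq (hα : 0 ≤ α) {x : Fin m → ℝ} {i : Fin m}
    (h : x i ≤ khatF m α x * α / m) :
    khatF m α x = khatF m α (Function.update x i 0) :=
  le_antisymm (khatF_le_update hα x i) (khatF_update_le ((event_iff hα x i).1 h))

lemma term_eq (hm : 0 < m) (hα : 0 < α) (x : Fin m → ℝ) (i : Fin m) :
    (if x i ≤ khatF m α x * α / m then (1:ℝ) else 0) / (max (khatF m α x) 1 : ℕ) =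
    (if x i ≤ khatF m α (Function.update x i 0) * α / m
      then 1 / (khatF m α (Function.update x i 0) : ℝ) else 0) := by
  by_cases h : x i ≤ khatF m α x * α / m
  · have heq : khatF m α x = khatF m α (Function.update x i 0) := khatF_update_eq hα.le h
    have h1 : 1 ≤ khatF m α (Function.update x i 0) := one_le_khatF_update hm hα x i
    rw [if_pos h, if_pos ((event_iff hα.le x i).1 h), heq, max_eq_left h1]
  · rw [if_neg h, if_neg (fun hc => h ((event_iff hα.le x i).2 hc)), zero_div]


variable (m α) in
/-- the leave-one-out integrand -/
noncomputable def F : (Fin m → ℝ) × ℝ → ℝ := fun q =>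
  if q.2 ≤ (khatF m α q.1 : ℝ) * α / m then 1 / (khatF m α q.1 : ℝ) else 0

lemma measurable_F : Measurable (F m α) := by
  have hk : Measurable fun q : (Fin m → ℝ) × ℝ => (khatF m α q.1 : ℝ) :=
    measurable_from_top.comp (measurable_khatF.comp measurable_fst)
  exact Measurable.ite
    (measurableSet_le measurable_snd ((hk.mul_const α).div_const m))
    (measurable_const.div hk) measurable_const

lemma F_nonneg (q : (Fin m → ℝ) × ℝ) : 0 ≤ F m α q := by
  rw [F]; split <;> positivity

lemma F_le_one (q : (Fin m → ℝ) × ℝ) : ‖F m α q‖ ≤ 1 := by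
  rw [Real.norm_eq_abs, abs_le]
  refine ⟨by linarith [F_nonneg (m := m) (α := α) q], ?_⟩
  rw [F]
  split
  · rcases Nat.eq_zero_or_pos (khatF m α q.1) with h | h
    · simp [h]
    · rw [div_le_one (by exact_mod_cast h)]
      exact_mod_cast h
  · norm_num

lemma inner_bound (hm : 0 < m) (hα : 0 < α) (y : Fin m → ℝ) :
    ∫ x, F m α (y, x) ∂((volume : Measure ℝ).restrict (Set.Icc 0 1)) ≤ α / m := by
  set k := khatF m α y with hk
  set t := (k : ℝ) * α / m with ht
  have hmR : (0:ℝ) < m := by exact_mod_cast hm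
  have ht0 : 0 ≤ t := by positivity
  have hfun : (fun x : ℝ => F m α (y, x)) = (Set.Iic t).indicator (fun _ => 1 / (k:ℝ)) := by
    funext x
    simp [F, Set.indicator, Set.mem_Iic, ← hk, ← ht]
  rw [hfun, integral_indicator_const _ measurableSet_Iic]
  rcases Nat.eq_zero_or_pos k with h0 | h0
  · rw [h0]; simp; positivity
  · have hkR : (0:ℝ) < k := by exact_mod_cast h0
    have hmeasle : ((volume : Measure ℝ).restrict (Set.Icc 0 1)) (Set.Iic t) ≤ ENNReal.ofReal t := by
      rw [Measure.restrict_apply measurableSet_Iic]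
      have hsub : Set.Iic t ∩ Set.Icc 0 1 ⊆ Set.Icc 0 t := fun z hz =>
        Set.mem_Icc.2 ⟨hz.2.1, hz.1⟩
      refine le_trans (measure_mono hsub) (le_of_eq ?_)
      rw [Real.volume_Icc, sub_zero]
    have htoReal : (((volume : Measure ℝ).restrict (Set.Icc 0 1)) (Set.Iic t)).toReal ≤ t :=
      ENNReal.toReal_le_of_le_ofReal ht0 hmeasle
    rw [smul_eq_mul]
    calc (((volume : Measure ℝ).restrict (Set.Icc 0 1)) (Set.Iic t)).toReal * (1 / (k:ℝ))
        ≤ t * (1 / (k:ℝ)) := by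
          apply mul_le_mul_of_nonneg_right htoReal; positivity
      _ = α / m := by rw [ht]; field_simp

lemma key_bound {Ω : Type*} [MeasureSpace Ω] [IsProbabilityMeasure (ℙ : Measure Ω)]
    (hm : 0 < m) (hα : 0 < α)
    (X : Ω → ℝ) (Y : Ω → (Fin m → ℝ)) (hX : Measurable X) (hY : Measurable Y)
    (hInd : IndepFun Y X ℙ)
    (hunifX : Measure.map X ℙ = (volume : Measure ℝ).restrict (Set.Icc 0 1)) :
    ∫ ω, F m α (Y ω, X ω) ≤ α / m := by
  let μ := (volume : Measure ℝ).restrict (Set.Icc 0 1)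
  haveI : IsProbabilityMeasure μ := ⟨by rw [Measure.restrict_apply_univ, Real.volume_Icc]; norm_num⟩
  haveI : IsProbabilityMeasure (Measure.map Y ℙ) := Measure.isProbabilityMeasure_map hY.aemeasurable
  have hmap : Measure.map (fun ω => (Y ω, X ω)) ℙ = (Measure.map Y ℙ).prod μ := by
    show _ = (Measure.map Y ℙ).prod ((volume : Measure ℝ).restrict (Set.Icc 0 1))
    rw [← hunifX]
    exact (indepFun_iff_map_prod_eq_prod_map_map hY.aemeasurable hX.aemeasurable).1 hInd
  have hFmeas := measurable_F (m := m) (α := α)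
  have hInt : Integrable (F m α) ((Measure.map Y ℙ).prod μ) :=
    Integrable.mono' (integrable_const 1) hFmeas.aestronglyMeasurable (ae_of_all _ F_le_one)
  calc ∫ ω, F m α (Y ω, X ω)
      = ∫ q, F m α q ∂(Measure.map (fun ω => (Y ω, X ω)) ℙ) := by
        rw [integral_map (hY.prodMk hX).aemeasurable hFmeas.aestronglyMeasurable]
    _ = ∫ q, F m α q ∂((Measure.map Y ℙ).prod μ) := by rw [hmap]
    _ = ∫ y, ∫ x, F m α (y, x) ∂μ ∂(Measure.map Y ℙ) := integral_prod _ hInt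
    _ ≤ ∫ _, α / m ∂(Measure.map Y ℙ) := by
        refine integral_mono_of_nonneg (ae_of_all _ fun y => ?_) (integrable_const _)
          (ae_of_all _ fun y => inner_bound hm hα y)
        exact integral_nonneg fun x => F_nonneg _
    _ = α / m := by simp

end BH

/-- Benjamini–Hochberg FDR control: with independent p-values, uniform on `[0,1]`
under the `m₀` true nulls, the BH procedure at level `α` (rejecting the `k̂` smallest
p-values, `k̂ = max{k : #{i : pᵢ ≤ kα/m} ≥ k}`) has `FDR ≤ (m₀/m) α ≤ α`. -/
theorem stmt_12 {Ω : Type*} [MeasureSpace Ω] [IsProbabilityMeasure (ℙ : Measure Ω)]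
    (m : ℕ) (hm : 0 < m) (p : Fin m → Ω → ℝ)
    (hmeas : ∀ i, Measurable (p i))
    (hindep : iIndepFun p ℙ)
    (N : Finset (Fin m)) (m₀ : ℕ) (hN : N.card = m₀)
    (hunif : ∀ i ∈ N, Measure.map (p i) ℙ = (volume : Measure ℝ).restrict (Set.Icc 0 1))
    (α : ℝ) (hα : 0 < α) (hα1 : α ≤ 1)
    (khat : Ω → ℕ)
    (hkhat : ∀ ω, khat ω =
      sSup {k | k ≤ m ∧ k ≤ (Finset.univ.filter fun i => p i ω ≤ k * α / m).card})
    (Rset : Ω → Finset (Fin m))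
    (hR : ∀ ω, Rset ω = Finset.univ.filter fun i => p i ω ≤ khat ω * α / m)
    (FDP : Ω → ℝ)
    (hFDP : ∀ ω, FDP ω = ((Rset ω ∩ N).card : ℝ) / max (Rset ω).card 1) :
    (∫ ω, FDP ω) ≤ (m₀ / m : ℝ) * α ∧ (m₀ / m : ℝ) * α ≤ α := by
  classical
  have hmR : (0:ℝ) < m := by exact_mod_cast hm
  set x : Ω → Fin m → ℝ := fun ω j => p j ω with hx
  have hkh : ∀ ω, khat ω = BH.khatF m α (x ω) := fun ω => hkhat ω
  have hcard : ∀ ω, (Rset ω).card = khat ω := by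
    intro ω
    rw [hR ω, hkh ω]
    exact BH.cnt_khatF hα.le (x ω)
  -- rewrite FDP as a sum over true nulls
  have hFDPsum : ∀ ω, FDP ω =
      ∑ i ∈ N, BH.F m α (Function.update (x ω) i 0, p i ω) := by
    intro ω
    rw [hFDP ω]
    have hinter : Rset ω ∩ N = N.filter (fun i => p i ω ≤ khat ω * α / m) := by
      rw [hR ω]
      ext j
      simp [Finset.mem_filter, and_comm]
    rw [hinter, Finset.card_filter, hcard ω]
    push_cast
    rw [Finset.sum_div]
    refine Finset.sum_congr rfl fun i _ => ?_
    have := BH.term_eq hm hα (x ω) i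
    rw [hkh ω]
    calc (if p i ω ≤ (BH.khatF m α (x ω) : ℝ) * α / ↑m then (1:ℝ) else 0) /
          max (BH.khatF m α (x ω) : ℝ) 1
        = (if x ω i ≤ (BH.khatF m α (x ω) : ℝ) * α / ↑m then (1:ℝ) else 0) /
          ((max (BH.khatF m α (x ω)) 1 : ℕ) : ℝ) := by
          rw [Nat.cast_max]; norm_num; rfl
      _ = BH.F m α (Function.update (x ω) i 0, p i ω) := this
  -- measurability of the leave-one-out vectors
  have hYmeas : ∀ i : Fin m, Measurable (fun ω => Function.update (x ω) i 0) := by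
    intro i
    apply measurable_pi_lambda
    intro j
    simp only [Function.update_apply]
    by_cases h : j = i
    · simp only [h, if_true]
      exact measurable_const
    · simp only [h, if_false]
      exact hmeas j
  -- independence of the leave-one-out vector and p i
  have hIndYX : ∀ i : Fin m, IndepFun (fun ω => Function.update (x ω) i 0) (p i) ℙ := by
    intro i
    have h2 := hindep.indepFun_finset ({i}ᶜ) {i} disjoint_compl_left hmeas
    set g : ((j : ({i}ᶜ : Finset (Fin m))) → ℝ) → (Fin m → ℝ) :=
      fun z j => if h : j = i then 0 else z ⟨j, Finset.mem_compl.2 (by simp [h])⟩ with hg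
    set e : ((j : ({i} : Finset (Fin m))) → ℝ) → ℝ :=
      fun w => w ⟨i, Finset.mem_singleton_self i⟩ with he
    have hgm : Measurable g := by
      apply measurable_pi_lambda
      intro j
      by_cases h : j = i
      · simp only [hg, h, dif_pos]
        exact measurable_const
      · simp only [hg, dif_neg h]
        exact measurable_pi_apply _
    have hem : Measurable e := measurable_pi_apply _
    have h3 := h2.comp hgm hem
    have hgeq : (g ∘ fun a (j : ({i}ᶜ : Finset (Fin m))) => p j a)
        = fun ω => Function.update (x ω) i 0 := by
      funext ω
      funext j
      by_cases h : j = i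
      · subst h
        simp only [Function.comp_apply, hg, dif_pos, Function.update_self]
      · simp only [Function.comp_apply, hg, dif_neg h, Function.update_of_ne h]; rfl
    have heeq : (e ∘ fun a (j : ({i} : Finset (Fin m))) => p j a) = p i := rfl
    rwa [hgeq, heeq] at h3
  -- integrability of the summands
  have hgimeas : ∀ i : Fin m,
      Measurable (fun ω => BH.F m α (Function.update (x ω) i 0, p i ω)) := fun i =>
    BH.measurable_F.comp ((hYmeas i).prodMk (hmeas i))
  have hInt : ∀ i : Fin m,
      Integrable (fun ω => BH.F m α (Function.update (x ω) i 0, p i ω)) ℙ := fun i =>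
    Integrable.mono' (integrable_const 1) (hgimeas i).aestronglyMeasurable
      (ae_of_all _ fun ω => BH.F_le_one _)
  have hm0m : (m₀ : ℝ) ≤ m := by
    have : N.card ≤ m := le_trans (Finset.card_le_univ N) (by simp)
    exact_mod_cast hN ▸ this
  constructor
  · calc ∫ ω, FDP ω
        = ∫ ω, ∑ i ∈ N, BH.F m α (Function.update (x ω) i 0, p i ω) := by
          simp only [hFDPsum]
      _ = ∑ i ∈ N, ∫ ω, BH.F m α (Function.update (x ω) i 0, p i ω) :=
          integral_finset_sum N fun i _ => hInt i
      _ ≤ ∑ _i ∈ N, α / m := by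
          refine Finset.sum_le_sum fun i hi => ?_
          exact BH.key_bound hm hα (p i) _ (hmeas i) (hYmeas i) (hIndYX i) (hunif i hi)
      _ = (m₀ / m : ℝ) * α := by
          rw [Finset.sum_const, hN, nsmul_eq_mul]
          ring
  · have h1 : (m₀ / m : ℝ) ≤ 1 := by rw [div_le_one hmR]; exact hm0m
    nlinarith
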